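/- In a borderline violation e = e'·r to k-synchronizability, the conflict-graph node v representing the final receive r (and its matching send) lies on every cycle of CG_{tr(e)} that is bad or has size greater than k; moreover, on any such cycle the edge entering v is labeled YR for some Y ∈ {S,R} (i.e., it is not a YS edge), and the edge leaving v is an SX edge for some X ∈ {S,R}. -/

import Mathlib

namespace MP

abbrev Pid := ℕ
abbrev Val := ℕ
abbrev Mid := ℕ

/-- Send and receive actions, tagged with a message identifier. -/
inductive Action : Type where
  | snd (i : Mid) (p q : Pid) (v : Val)
  | rcv (i : Mid) (q : Pid) (v : Val)
deriving DecidableEq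

abbrev Exec := List Action

namespace Action
def proc : Action → Pid
  | snd _ p _ _ => p
  | rcv _ q _ => q
def dest : Action → Pid
  | snd _ _ q _ => q
  | rcv _ q _ => q
def mid : Action → Mid
  | snd i _ _ _ => i
  | rcv i _ _ => i
def isSend : Action → Prop
  | snd _ _ _ _ => True
  | rcv _ _ _ => False
def isRecv : Action → Prop
  | snd _ _ _ _ => False
  | rcv _ _ _ => True
end Action

def sendIds (e : Exec) : List Mid :=
  e.filterMap fun a => match a with | .snd i _ _ _ => some i | _ => none
def recvIds (e : Exec) : List Mid :=
  e.filterMap fun a => match a with | .rcv i _ _ => some i | _ => none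

/-- Every receive is matched by an earlier send with the same id, destination and payload. -/
def SendBeforeRecv (e : Exec) : Prop :=
  ∀ (n : ℕ) (i : Mid) (q : Pid) (v : Val), e[n]? = some (Action.rcv i q v) →
    ∃ m < n, ∃ p : Pid, e[m]? = some (Action.snd i p q v)

def ValidTrace (e : Exec) : Prop :=
  (sendIds e).Nodup ∧ (recvIds e).Nodup ∧ SendBeforeRecv e

/-- Projection of an execution on the actions of process `p` (program order). -/
def proj (p : Pid) (e : Exec) : Exec := e.filter (fun a => a.proc == p)

/-- Two executions are trace-equivalent (same happens-before relation) iff one is a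
permutation of the other preserving per-process program order (message identifiers
make the matching relation coincide). -/
def TraceEquiv (e e' : Exec) : Prop :=
  e.Perm e' ∧ ∀ p, proj p e = proj p e'

/-- One step of the happens-before relation on positions: program order or matching. -/
def hbBase (e : Exec) (m n : ℕ) : Prop :=
  m < n ∧ ((∃ a b, e[m]? = some a ∧ e[n]? = some b ∧ a.proc = b.proc) ∨
    (∃ i p q v, e[m]? = some (.snd i p q v) ∧ e[n]? = some (.rcv i q v)))

/-- The happens-before (causal) relation of a trace. -/
def hb (e : Exec) : ℕ → ℕ → Prop := Relation.TransGen (hbBase e)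

/-- Causal delivery: messages sent to the same process are received in an order
consistent with the causal order of their sends. -/
def CausalDelivery (e : Exec) : Prop :=
  ∀ (m n n' : ℕ) (i j : Mid) (p p' q : Pid) (v v' : Val),
    e[m]? = some (Action.snd i p q v) → e[n]? = some (Action.snd j p' q v') →
    hb e m n → e[n']? = some (Action.rcv j q v') →
      ∃ m' < n', e[m']? = some (Action.rcv i q v)

inductive Kind | S | R
deriving DecidableEq

/-- The `X`-action (send or receive) of conflict-graph node `i` in execution `e`. -/
def actionAt (e : Exec) (i : Mid) : Kind → Action → Prop
  | .S, a => (∃ p q v, a = .snd i p q v) ∧ a ∈ e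
  | .R, a => (∃ q v, a = .rcv i q v) ∧ a ∈ e

def CGNode (e : Exec) (i : Mid) : Prop := ∃ p q v, Action.snd i p q v ∈ e

/-- Conflict-graph edge from node `i` to node `j` with label `XY`: the `X`-action of `i`
and the `Y`-action of `j` are by the same process, with the `X`-action of `i` first. -/
def CGEdge (e : Exec) (X Y : Kind) (i j : Mid) : Prop :=
  i ≠ j ∧ ∃ (a b : Action) (m n : ℕ), actionAt e i X a ∧ actionAt e j Y b ∧
    a.proc = b.proc ∧ m < n ∧ e[m]? = some a ∧ e[n]? = some b

/-- A (simple) cycle in the conflict graph of `e`, with labelled edges. -/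
structure CGCycle (e : Exec) where
  size : ℕ
  pos : 0 < size
  node : ℕ → Mid
  lab : ℕ → Kind × Kind
  inj : ∀ k l, k < size → l < size → node k = node l → k = l
  edge : ∀ k < size, CGEdge e (lab k).1 (lab k).2 (node k) (node ((k + 1) % size))

/-- A cycle is good if it contains no RS-labelled edge. -/
def CGCycle.Good {e : Exec} (c : CGCycle e) : Prop :=
  ∀ k < c.size, c.lab k ≠ (Kind.R, Kind.S)

def CGStep (e : Exec) (i j : Mid) : Prop := ∃ X Y, CGEdge e X Y i j
def CGReach (e : Exec) : Mid → Mid → Prop := Relation.ReflTransGen (CGStep e)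
def SameSCC (e : Exec) (i j : Mid) : Prop := CGReach e i j ∧ CGReach e j i
/-- `C` is a strongly connected component of the conflict graph of `e`. -/
def IsSCC (e : Exec) (C : Set Mid) : Prop :=
  ∃ i, CGNode e i ∧ C = {j | CGNode e j ∧ SameSCC e i j}

/-- A message passing system: one labelled transition system per process. -/
structure System where
  State : Type
  init : Pid → State
  sendTr : Pid → State → Pid → Val → State → Prop
  recvTr : Pid → State → Val → State → Prop

/-- Asynchronous configuration: local states plus per-destination FIFO buffers. -/
structure Config (S : System) where
  loc : Pid → S.State
  buf : Pid → List (Mid × Val)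

def initConfig (S : System) : Config S := ⟨S.init, fun _ => []⟩

inductive Step (S : System) : Config S → Action → Config S → Prop
  | send {c : Config S} {i : Mid} {p q : Pid} {v : Val} {l' : S.State} :
      S.sendTr p (c.loc p) q v l' →
      Step S c (.snd i p q v)
        ⟨Function.update c.loc p l', Function.update c.buf q (c.buf q ++ [(i, v)])⟩
  | recv {c : Config S} {i : Mid} {q : Pid} {v : Val} {b : List (Mid × Val)} {l' : S.State} :
      c.buf q = (i, v) :: b →
      S.recvTr q (c.loc q) v l' →
      Step S c (.rcv i q v)
        ⟨Function.update c.loc q l', Function.update c.buf q b⟩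

inductive Reach (S : System) : Config S → Exec → Config S → Prop
  | nil (c) : Reach S c [] c
  | cons {c c' c'' : Config S} {a : Action} {e : Exec} :
      Step S c a c' → Reach S c' e c'' → Reach S c (a :: e) c''

/-- Asynchronous executions (send identifiers are fresh, i.e. pairwise distinct). -/
def AsyncExec (S : System) (e : Exec) : Prop :=
  (sendIds e).Nodup ∧ ∃ c, Reach S (initConfig S) e c

/-- A `k`-exchange block: at most `k` sends followed by receives matching only sends
of the same block. -/
def Block (k : ℕ) (b : Exec) : Prop :=
  ∃ sends recvs : Exec, b = sends ++ recvs ∧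
    (∀ a ∈ sends, a.isSend) ∧ (∀ a ∈ recvs, a.isRecv) ∧
    sends.length ≤ k ∧
    (∀ i q v, Action.rcv i q v ∈ recvs → ∃ p, Action.snd i p q v ∈ sends)

/-- Decomposition into a sequence of `k`-exchange blocks. -/
inductive Blocks (k : ℕ) : Exec → Prop
  | nil : Blocks k []
  | app {b e : Exec} : Block k b → Blocks k e → Blocks k (b ++ e)

/-- A trace is `k`-synchronous if some trace-equivalent execution is a sequence of
`k`-exchanges. -/
def KSynchronous (k : ℕ) (e : Exec) : Prop :=
  ∃ e', TraceEquiv e e' ∧ SendBeforeRecv e' ∧ Blocks k e'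

/-- Executions of the `k`-synchronous semantics of `S`. -/
def SyncExec (S : System) (k : ℕ) (e : Exec) : Prop :=
  AsyncExec S e ∧ Blocks k e

/-- Every asynchronous execution of `S` is trace-equivalent to a `k`-synchronous one. -/
def KSynchronizable (S : System) (k : ℕ) : Prop :=
  ∀ e, AsyncExec S e → KSynchronous k e

/-- A borderline violation: a violation to `k`-synchronizability all of whose strict
prefixes are `k`-synchronous. -/
def Borderline (S : System) (k : ℕ) (e : Exec) : Prop :=
  AsyncExec S e ∧ ¬ KSynchronous k e ∧
  ∀ e', e' <+: e → e' ≠ e → KSynchronous k e'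

def Matched (e : Exec) : Prop :=
  ∀ i p q v, Action.snd i p q v ∈ e → Action.rcv i q v ∈ e

def HasUnmatched (e : Exec) : Prop :=
  ∃ i p q v, Action.snd i p q v ∈ e ∧ Action.rcv i q v ∉ e

def NoSend (S : System) (p : Pid) (l : S.State) : Prop := ∀ q v l', ¬ S.sendTr p l q v l'
def NoRecv (S : System) (p : Pid) (l : S.State) : Prop := ∀ v l', ¬ S.recvTr p l v l'
/-- A final local state: no outgoing transitions. -/
def FinalState (S : System) (p : Pid) (l : S.State) : Prop := NoSend S p l ∧ NoRecv S p l

/-- Deadlocked local states: some process is waiting to receive, and every process is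
in a receiving or final state (no send transitions). -/
def DeadlockLocs (S : System) (l : ∀ _ : Pid, S.State) : Prop :=
  (∃ p v l', S.recvTr p (l p) v l') ∧ ∀ q, NoSend S q (l q)

/-- `l` is a `V`-receiving state of `p`: receiving, and `V` is exactly the set of
receivable payloads. -/
def VReceiving (S : System) (p : Pid) (l : S.State) (V : Set Val) : Prop :=
  NoSend S p l ∧ (∃ v l', S.recvTr p l v l') ∧ ∀ v, (v ∈ V ↔ ∃ l', S.recvTr p l v l')

/-- Unspecified reception: some process is in a receiving state but the head of its
buffer is not receivable there. -/
def UnspecifiedReception (S : System) (c : Config S) : Prop :=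
  ∃ p V, VReceiving S p (c.loc p) V ∧ ∃ i v b, c.buf p = (i, v) :: b ∧ v ∉ V

/-- Position `n` of `e` carries an unmatched send with destination `p`. -/
def UnmatchedAt (e : Exec) (n : ℕ) (p : Pid) : Prop :=
  ∃ (i : Mid) (p' : Pid) (v : Val), e[n]? = some (Action.snd i p' p v) ∧ Action.rcv i p v ∉ e

/-- A causally minimal unmatched send with destination `p`. -/
def MinUnmatched (e : Exec) (n : ℕ) (p : Pid) : Prop :=
  UnmatchedAt e n p ∧ ∀ m, UnmatchedAt e m p → ¬ hb e m n

/-- Deterministic transition relations. -/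
def Deterministic (S : System) : Prop :=
  (∀ p l q v l₁ l₂, S.sendTr p l q v l₁ → S.sendTr p l q v l₂ → l₁ = l₂) ∧
  (∀ p l v l₁ l₂, S.recvTr p l v l₁ → S.recvTr p l v l₂ → l₁ = l₂)

/-- No process performs more than `K` consecutive sends. -/
def SendBoundedE (K : ℕ) (e : Exec) : Prop :=
  ∀ p l, l <:+: proj p e → (∀ a ∈ l, a.isSend) → l.length ≤ K
/-- No process performs more than `K` consecutive receives. -/
def RecvBoundedE (K : ℕ) (e : Exec) : Prop :=
  ∀ p l, l <:+: proj p e → (∀ a ∈ l, a.isRecv) → l.length ≤ K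
/-- Flow-bounded system with bound `K`. -/
def FlowBounded (S : System) (K : ℕ) : Prop :=
  ∀ e, AsyncExec S e → SendBoundedE K e ∧ RecvBoundedE K e

/-- A finite-state message passing system. -/
structure FinSystem where
  nS : ℕ
  nP : ℕ
  nV : ℕ
  init : Fin nP → Fin nS
  sendTr : Fin nP → Fin nS → Fin nP → Fin nV → Fin nS → Bool
  recvTr : Fin nP → Fin nS → Fin nV → Fin nS → Bool

def FinSystem.toSystem (F : FinSystem) : System where
  State := Option (Fin F.nS)
  init p := if h : p < F.nP then some (F.init ⟨p, h⟩) else none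
  sendTr p l q v l' :=
    ∃ (hp : p < F.nP) (hq : q < F.nP) (hv : v < F.nV) (s s' : Fin F.nS),
      l = some s ∧ l' = some s' ∧ F.sendTr ⟨p, hp⟩ s ⟨q, hq⟩ ⟨v, hv⟩ s' = true
  recvTr p l v l' :=
    ∃ (hp : p < F.nP) (hv : v < F.nV) (s s' : Fin F.nS),
      l = some s ∧ l' = some s' ∧ F.recvTr ⟨p, hp⟩ s ⟨v, hv⟩ s' = true


section AuxProof

open List

/-! ### Generic list lemmas -/

lemma filterMap_nodup_pos {α β : Type} {f : α → Option β} {l : List α} :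
    ∀ {m n : ℕ} {a b : α} {i : β},
      (l.filterMap f).Nodup → l[m]? = some a → l[n]? = some b →
      f a = some i → f b = some i → m = n := by
  induction l with
  | nil => intro m n a b i _ hm; simp at hm
  | cons x t ih =>
    intro m n a b i hnd hm hn ha hb
    match m, n with
    | 0, 0 => rfl
    | 0, n+1 =>
      have hxa : x = a := by simpa using hm
      subst hxa
      have hbt : b ∈ t := List.mem_of_getElem? (by simpa using hn)
      have hi : i ∈ t.filterMap f := List.mem_filterMap.2 ⟨b, hbt, hb⟩
      rw [List.filterMap_cons, ha] at hnd
      exact absurd hi (List.nodup_cons.1 hnd).1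
    | m+1, 0 =>
      have hxb : x = b := by simpa using hn
      subst hxb
      have hat : a ∈ t := List.mem_of_getElem? (by simpa using hm)
      have hi : i ∈ t.filterMap f := List.mem_filterMap.2 ⟨a, hat, ha⟩
      rw [List.filterMap_cons, hb] at hnd
      exact absurd hi (List.nodup_cons.1 hnd).1
    | m+1, n+1 =>
      have hnd' : (t.filterMap f).Nodup := by
        rw [List.filterMap_cons] at hnd
        cases hfx : f x with
        | none => rwa [hfx] at hnd
        | some y => rw [hfx] at hnd; exact (List.nodup_cons.1 hnd).2
      have := ih hnd' (by simpa using hm) (by simpa using hn) ha hb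
      omega

lemma filterMap_sublist_mono {α β : Type} {f g : α → Option β}
    (h : ∀ a b, f a = some b → g a = some b) : ∀ l : List α, l.filterMap f <+ l.filterMap g := by
  intro l; induction l with
  | nil => simp
  | cons x t ih =>
    rw [List.filterMap_cons, List.filterMap_cons]
    cases hfx : f x with
    | none =>
      cases hgx : g x with
      | none => exact ih
      | some b => exact ih.cons _
    | some b => rw [h x b hfx]; exact ih.cons₂ _

/-! ### Ordered occurrence ("before") lemmas -/

def Before (a b : Action) (l : Exec) : Prop :=
  ∃ m n : ℕ, m < n ∧ l[m]? = some a ∧ l[n]? = some b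

lemma before_cons {a b x : Action} {l : Exec} (h : Before a b l) : Before a b (x :: l) := by
  obtain ⟨m, n, hmn, hm, hn⟩ := h
  exact ⟨m+1, n+1, by omega, by simpa using hm, by simpa using hn⟩

lemma before_head_mem {a b x : Action} {l : Exec} (hax : a = x) (hb : b ∈ l) :
    Before a b (x :: l) := by
  obtain ⟨n, hn⟩ := List.getElem?_of_mem hb
  exact ⟨0, n+1, Nat.succ_pos n, by simp [hax], by simpa using hn⟩

lemma before_filter (p : Action → Bool) {a b : Action} (hpa : p a = true) (hpb : p b = true) :
    ∀ {l : Exec}, Before a b l → Before a b (l.filter p) := by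
  intro l
  induction l with
  | nil => rintro ⟨m, n, _, hm, _⟩; simp at hm
  | cons x t ih =>
    rintro ⟨m, n, hmn, hm, hn⟩
    match m, n with
    | 0, n+1 =>
      have hxa : x = a := by simpa using hm
      subst hxa
      have hbt : b ∈ t := List.mem_of_getElem? (by simpa using hn)
      have hbf : b ∈ t.filter p := List.mem_filter.2 ⟨hbt, hpb⟩
      rw [List.filter_cons, if_pos hpa]
      exact before_head_mem rfl hbf
    | m+1, n+1 =>
      have h' := ih ⟨m, n, by omega, by simpa using hm, by simpa using hn⟩
      rw [List.filter_cons]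
      by_cases hpx : p x = true
      · rw [if_pos hpx]; exact before_cons h'
      · rw [if_neg hpx]; exact h'

lemma before_sublist {a b : Action} {l L : Exec} (hs : l <+ L) (h : Before a b l) :
    Before a b L := by
  induction hs with
  | slnil => exact h
  | cons x _ ih => exact before_cons (ih h)
  | @cons_cons l₁ l₂ x hs ih =>
    obtain ⟨m, n, hmn, hm, hn⟩ := h
    match m, n with
    | 0, n+1 =>
      have hxa : x = a := by simpa using hm
      have hbt : b ∈ l₁ := List.mem_of_getElem? (by simpa using hn)
      exact before_head_mem hxa.symm (hs.subset hbt)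
    | m+1, n+1 =>
      exact before_cons (ih ⟨m, n, by omega, by simpa using hm, by simpa using hn⟩)

/-! ### Per-destination send/receive id streams -/

def sendTo (q : Pid) : Action → Option Mid
  | .snd i _ q' _ => if q' = q then some i else none
  | .rcv _ _ _ => none

def recvAt (q : Pid) : Action → Option Mid
  | .rcv i q' _ => if q' = q then some i else none
  | _ => none

def sendsTo (q : Pid) (e : Exec) : List Mid := e.filterMap (sendTo q)
def recvsAt (q : Pid) (e : Exec) : List Mid := e.filterMap (recvAt q)

lemma sendTo_eq_some {q : Pid} {a : Action} {i : Mid} (h : sendTo q a = some i) :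
    ∃ p v, a = .snd i p q v := by
  cases a with
  | snd j p q2 v =>
    simp only [sendTo] at h
    split at h
    · next hq => exact ⟨p, v, by simp_all⟩
    · simp at h
  | rcv j q2 v => simp [sendTo] at h

lemma sendsTo_sublist (q : Pid) (e : Exec) : sendsTo q e <+ sendIds e := by
  apply filterMap_sublist_mono
  intro a b h
  obtain ⟨p, v, rfl⟩ := sendTo_eq_some h
  simp only [sendTo] at h
  split at h
  · simpa using h
  · simp at h

lemma reach_buf {S : System} {c0 c : Config S} {e : Exec} (h : Reach S c0 e c) :
    ∀ q : Pid, (c0.buf q).map Prod.fst ++ sendsTo q e = recvsAt q e ++ (c.buf q).map Prod.fst := by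
  induction h with
  | nil c => intro q; simp [sendsTo, recvsAt]
  | @cons c c' c'' a e st _ ih =>
    cases st with
    | @send ii pp qq vv ll hs =>
      intro q0
      by_cases hq : qq = q0
      · subst hq
        have ihq := ih qq
        simp only [Function.update_self, List.map_append, List.map_cons, List.map_nil] at ihq
        unfold sendsTo recvsAt at ihq ⊢
        rw [List.filterMap_cons_some (show sendTo qq (Action.snd ii pp qq vv) = some ii by
              simp [sendTo]),
          List.filterMap_cons_none (show recvAt qq (Action.snd ii pp qq vv) = none from rfl),
          ← ihq]
        simp
      · have ihq := ih q0
        simp only [Function.update_of_ne (Ne.symm hq)] at ihq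
        unfold sendsTo recvsAt at ihq ⊢
        rw [List.filterMap_cons_none (show sendTo q0 (Action.snd ii pp qq vv) = none by
              simp [sendTo, hq]),
          List.filterMap_cons_none (show recvAt q0 (Action.snd ii pp qq vv) = none from rfl)]
        exact ihq
    | @recv ii qq vv bb ll hbuf hr =>
      intro q0
      by_cases hq : qq = q0
      · subst hq
        have ihq := ih qq
        simp only [Function.update_self] at ihq
        unfold sendsTo recvsAt at ihq ⊢
        rw [List.filterMap_cons_none (show sendTo qq (Action.rcv ii qq vv) = none from rfl),
          List.filterMap_cons_some (show recvAt qq (Action.rcv ii qq vv) = some ii by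
              simp [recvAt]),
          hbuf]
        simp only [List.map_cons, List.cons_append]
        rw [ihq]
      · have ihq := ih q0
        simp only [Function.update_of_ne (Ne.symm hq)] at ihq
        unfold sendsTo recvsAt at ihq ⊢
        rw [List.filterMap_cons_none (show sendTo q0 (Action.rcv ii qq vv) = none from rfl),
          List.filterMap_cons_none (show recvAt q0 (Action.rcv ii qq vv) = none by
              simp [recvAt, hq])]
        exact ihq

lemma asyncRecvUnique {S : System} {e : Exec} (h : AsyncExec S e) :
    ∀ {m n : ℕ} {i : Mid} {q q' : Pid} {v v' : Val},
      e[m]? = some (.rcv i q v) → e[n]? = some (.rcv i q' v') → m = n := by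
  obtain ⟨hnd, c, hr⟩ := h
  intro m n i q q' v v' hm hn
  have key : ∀ q0, sendsTo q0 e = recvsAt q0 e ++ (c.buf q0).map Prod.fst := by
    intro q0
    have := reach_buf hr q0
    simpa [initConfig] using this
  have hndq : ∀ q0, (recvsAt q0 e).Nodup := by
    intro q0
    have h1 : recvsAt q0 e <+ sendsTo q0 e := by
      rw [key q0]; exact List.sublist_append_left _ _
    exact (h1.trans (sendsTo_sublist q0 e)).nodup hnd
  by_cases hqq : q = q'
  · subst hqq
    exact filterMap_nodup_pos (f := recvAt q) (i := i) (hndq q) hm hn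
      (by simp [recvAt]) (by simp [recvAt])
  · exfalso
    have h1 : i ∈ recvsAt q e :=
      List.mem_filterMap.2 ⟨_, List.mem_of_getElem? hm, by simp [recvAt]⟩
    have h2 : i ∈ recvsAt q' e :=
      List.mem_filterMap.2 ⟨_, List.mem_of_getElem? hn, by simp [recvAt]⟩
    have s1 : i ∈ sendsTo q e := by rw [key q]; exact List.mem_append_left _ h1
    have s2 : i ∈ sendsTo q' e := by rw [key q']; exact List.mem_append_left _ h2
    obtain ⟨a1, ha1, hfa1⟩ := List.mem_filterMap.1 s1
    obtain ⟨a2, ha2, hfa2⟩ := List.mem_filterMap.1 s2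
    obtain ⟨p1, v1, rfl⟩ := sendTo_eq_some hfa1
    obtain ⟨p2, v2, rfl⟩ := sendTo_eq_some hfa2
    obtain ⟨m1, hm1⟩ := List.getElem?_of_mem ha1
    obtain ⟨m2, hm2⟩ := List.getElem?_of_mem ha2
    have hnd' : (e.filterMap fun a =>
        match a with | Action.snd i _ _ _ => some i | _ => none).Nodup := hnd
    have : m1 = m2 := filterMap_nodup_pos (i := i) hnd' hm1 hm2 rfl rfl
    rw [this, hm2] at hm1
    have := Option.some.inj hm1
    simp only [Action.snd.injEq] at this
    exact hqq this.2.2.1.symm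

/-! ### Facts about ids and actions -/

lemma sendIds_append (l l' : Exec) : sendIds (l ++ l') = sendIds l ++ sendIds l' :=
  List.filterMap_append

lemma mid_mem_sendIds {i : Mid} {p q : Pid} {v : Val} {e : Exec}
    (h : Action.snd i p q v ∈ e) : i ∈ sendIds e :=
  List.mem_filterMap.2 ⟨_, h, rfl⟩

lemma actionAt_mid {e : Exec} {u : Mid} {X : Kind} {a : Action} (h : actionAt e u X a) :
    a.mid = u ∧ a ∈ e := by
  cases X with
  | S => obtain ⟨⟨p, q, v, rfl⟩, hm⟩ := h; exact ⟨rfl, hm⟩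
  | R => obtain ⟨⟨q, v, rfl⟩, hm⟩ := h; exact ⟨rfl, hm⟩

lemma actionAt_mem {e e2 : Exec} {u : Mid} {X : Kind} {a : Action}
    (h : actionAt e u X a) (hm : a ∈ e2) : actionAt e2 u X a := by
  cases X with
  | S => exact ⟨h.1, hm⟩
  | R => exact ⟨h.1, hm⟩

lemma blocks_matched {k : ℕ} : ∀ {e : Exec}, Blocks k e →
    ∀ {i : Mid} {q : Pid} {v : Val}, Action.rcv i q v ∈ e → ∃ p, Action.snd i p q v ∈ e := by
  intro e hb
  induction hb with
  | nil => intro i q v h; simp at h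
  | @app b rest hB _ ih =>
    intro i q v h
    rcases List.mem_append.1 h with h1 | h2
    · obtain ⟨sends, recvs, rfl, hS, _, _, hM⟩ := hB
      rcases List.mem_append.1 h1 with hs | hr
      · exact absurd (hS _ hs) (by simp [Action.isSend])
      · obtain ⟨p, hp⟩ := hM i q v hr
        exact ⟨p, List.mem_append_left _ (List.mem_append_left _ hp)⟩
    · obtain ⟨p, hp⟩ := ih h2
      exact ⟨p, List.mem_append_right _ hp⟩

/-! ### Cycles of block-decomposed executions -/

lemma blocks_cycle {k : ℕ} : ∀ {e : Exec}, Blocks k e → (sendIds e).Nodup →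
    ∀ c : CGCycle e, c.Good ∧ c.size ≤ k := by
  intro e hb
  induction hb with
  | nil =>
    intro _ c
    obtain ⟨_, a, b, m, n, _, _, _, _, hm, _⟩ := c.edge 0 c.pos
    simp at hm
  | @app blk rest hB hrest ih =>
    intro hnd c
    have hnds : (sendIds blk ++ sendIds rest).Nodup := by rwa [sendIds_append] at hnd
    have hdisj : ∀ i : Mid, i ∈ sendIds blk → i ∈ sendIds rest → False := by
      intro i h1 h2
      exact (List.disjoint_of_nodup_append hnds) h1 h2
    obtain ⟨sends, recvs, hbe, hS, hR, hlen, hM⟩ := hB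
    set P : Mid → Prop := fun u => ∃ p q' v', Action.snd u p q' v' ∈ blk with hP
    have memb_P : ∀ (u : Mid) (a : Action), a ∈ blk → a.mid = u → P u := by
      intro u a ha hmid
      cases a with
      | snd j p q2 v2 => exact ⟨p, q2, v2, by rwa [show j = u from hmid] at ha⟩
      | rcv j q2 v2 =>
        have hj : j = u := hmid
        subst hj
        rw [hbe] at ha
        rcases List.mem_append.1 ha with h1 | h2
        · exact absurd (hS _ h1) (by simp [Action.isSend])
        · obtain ⟨p, hp⟩ := hM j q2 v2 h2
          exact ⟨p, q2, v2, by rw [hbe]; exact List.mem_append_left _ hp⟩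
    have C_noP : ∀ u : Mid, ¬ P u → ∀ (pos : ℕ) (a : Action),
        (blk ++ rest)[pos]? = some a → a.mid = u → blk.length ≤ pos := by
      intro u hPu pos a hpos hmid
      by_contra hlt
      push_neg at hlt
      have ha : a ∈ blk := List.mem_of_getElem? (by rwa [List.getElem?_append_left hlt] at hpos)
      exact hPu (memb_P u a ha hmid)
    have C_P : ∀ u : Mid, P u → ∀ (pos : ℕ) (a : Action),
        (blk ++ rest)[pos]? = some a → a.mid = u → pos < blk.length := by
      intro u hPu pos a hpos hmid
      by_contra hge
      push_neg at hge
      have ha : a ∈ rest := List.mem_of_getElem? (by rwa [List.getElem?_append_right hge] at hpos)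
      obtain ⟨p, q', v', hmem⟩ := hPu
      have hib : u ∈ sendIds blk := mid_mem_sendIds hmem
      cases a with
      | snd j p2 q2 v2 =>
        have hj : j = u := hmid
        subst hj
        exact hdisj j hib (mid_mem_sendIds ha)
      | rcv j q2 v2 =>
        have hj : j = u := hmid
        subst hj
        obtain ⟨p2, hp2⟩ := blocks_matched hrest ha
        exact hdisj j hib (mid_mem_sendIds hp2)
    have C2 : ∀ (u w : Mid) (X Y : Kind), CGEdge (blk ++ rest) X Y u w → P w → P u := by
      intro u w X Y hedge hPw
      obtain ⟨_, a, b', m, n, hA, hB', _, hmn, hm, hn⟩ := hedge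
      have hn' : n < blk.length := C_P w hPw n b' hn (actionAt_mid hB').1
      have hm' : m < blk.length := lt_trans hmn hn'
      have ham : a ∈ blk := List.mem_of_getElem? (by rwa [List.getElem?_append_left hm'] at hm)
      exact memb_P u a ham (actionAt_mid hA).1
    by_cases hall : ∀ idx, idx < c.size → ¬ P (c.node idx)
    · -- the whole cycle lives in `rest`
      have hedge' : ∀ t, t < c.size → CGEdge rest (c.lab t).1 (c.lab t).2
          (c.node t) (c.node ((t+1) % c.size)) := by
        intro t ht
        obtain ⟨hne, a, b', m, n, hA, hB', hpr, hmn, hm, hn⟩ := c.edge t ht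
        have h1 : blk.length ≤ m := C_noP _ (hall t ht) m a hm (actionAt_mid hA).1
        have h2 : blk.length ≤ n := le_trans h1 (le_of_lt hmn)
        have hm2 : rest[m - blk.length]? = some a := by
          rwa [List.getElem?_append_right h1] at hm
        have hn2 : rest[n - blk.length]? = some b' := by
          rwa [List.getElem?_append_right h2] at hn
        exact ⟨hne, a, b', m - blk.length, n - blk.length,
          actionAt_mem hA (List.mem_of_getElem? hm2), actionAt_mem hB' (List.mem_of_getElem? hn2),
          hpr, by omega, hm2, hn2⟩
      have hndr : (sendIds rest).Nodup := (List.nodup_append.1 hnds).2.1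
      exact ih hndr ⟨c.size, c.pos, c.node, c.lab, c.inj, hedge'⟩
    · push_neg at hall
      obtain ⟨idx0, hidx0, hPidx0⟩ := hall
      have step : ∀ (t idx : ℕ), idx < c.size → P (c.node ((idx + t) % c.size)) →
          P (c.node idx) := by
        intro t
        induction t with
        | zero => intro idx hidx hp; rwa [Nat.add_zero, Nat.mod_eq_of_lt hidx] at hp
        | succ t iht =>
          intro idx hidx hp
          have h1 : (idx + 1) % c.size < c.size := Nat.mod_lt _ c.pos
          have h2 : ((idx + 1) % c.size + t) % c.size = (idx + (t+1)) % c.size := by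
            rw [Nat.mod_add_mod]; congr 1; omega
          have hPn : P (c.node ((idx + 1) % c.size)) := iht _ h1 (by rw [h2]; exact hp)
          exact C2 _ _ _ _ (c.edge idx hidx) hPn
      have hallP : ∀ idx, idx < c.size → P (c.node idx) := by
        intro idx hidx
        have harith : (idx + (c.size - idx + idx0)) % c.size = idx0 := by
          have h1 : idx + (c.size - idx + idx0) = idx0 + c.size := by omega
          rw [h1, Nat.add_mod_right]
          exact Nat.mod_eq_of_lt hidx0
        exact step _ idx hidx (by rw [harith]; exact hPidx0)
      constructor
      · -- no RS edge
        intro t ht hRS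
        obtain ⟨hne, a, b', m, n, hA, hB', hpr, hmn, hm, hn⟩ := c.edge t ht
        have hl1 : (c.lab t).1 = Kind.R := by rw [hRS]
        have hl2 : (c.lab t).2 = Kind.S := by rw [hRS]
        rw [hl1] at hA
        rw [hl2] at hB'
        obtain ⟨⟨qa, va, rfl⟩, _⟩ := hA
        obtain ⟨⟨pb, qb, vb, rfl⟩, _⟩ := hB'
        have hnlt : n < blk.length :=
          C_P _ (hallP _ (Nat.mod_lt _ c.pos)) n _ hn rfl
        have hmlt : m < blk.length := lt_trans hmn hnlt
        have hab : (sends ++ recvs)[m]? = some (Action.rcv (c.node t) qa va) := by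
          rw [← hbe]; rwa [List.getElem?_append_left hmlt] at hm
        have hbn : (sends ++ recvs)[n]? = some (Action.snd (c.node ((t+1) % c.size)) pb qb vb) := by
          rw [← hbe]; rwa [List.getElem?_append_left hnlt] at hn
        have hsm : sends.length ≤ m := by
          by_contra hlt
          push_neg at hlt
          have hmem : Action.rcv (c.node t) qa va ∈ sends :=
            List.mem_of_getElem? (by rwa [List.getElem?_append_left hlt] at hab)
          exact absurd (hS _ hmem) (by simp [Action.isSend])
        have hns : n < sends.length := by
          by_contra hge
          push_neg at hge
          have hmem : Action.snd (c.node ((t+1) % c.size)) pb qb vb ∈ recvs :=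
            List.mem_of_getElem? (by rwa [List.getElem?_append_right hge] at hbn)
          exact absurd (hR _ hmem) (by simp [Action.isRecv])
        omega
      · -- size bound
        have hsub : ∀ x ∈ (List.range c.size).map c.node, x ∈ sendIds sends := by
          intro x hx
          obtain ⟨t, ht, rfl⟩ := List.mem_map.1 hx
          have ht' := List.mem_range.1 ht
          obtain ⟨p, q', v', hmem⟩ := hallP t ht'
          have hmem' : Action.snd (c.node t) p q' v' ∈ sends ++ recvs := by
            rw [← hbe]; exact hmem
          rcases List.mem_append.1 hmem' with h1 | h2
          · exact mid_mem_sendIds h1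
          · exact absurd (hR _ h2) (by simp [Action.isRecv])
        have hnodup : ((List.range c.size).map c.node).Nodup :=
          (List.nodup_range : (List.range c.size).Nodup).map_on
            (fun x hx y hy hxy => c.inj x y (List.mem_range.1 hx) (List.mem_range.1 hy) hxy)
        have hle := (List.subperm_of_subset hnodup hsub).length_le
        simp only [List.length_map, List.length_range] at hle
        calc c.size ≤ (sendIds sends).length := hle
          _ ≤ sends.length := List.length_filterMap_le _ _
          _ ≤ k := hlen

/-! ### Cycles survive trace equivalence; k-synchronous traces have only small good cycles -/

lemma ksync_cycle {k : ℕ} {e : Exec} (hnd : (sendIds e).Nodup) (h : KSynchronous k e)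
    (c : CGCycle e) : c.Good ∧ c.size ≤ k := by
  obtain ⟨e2, ⟨hperm, hproj⟩, _, hblocks⟩ := h
  have hed : ∀ t, t < c.size → CGEdge e2 (c.lab t).1 (c.lab t).2
      (c.node t) (c.node ((t+1) % c.size)) := by
    intro t ht
    obtain ⟨hne, a, b', m, n, hA, hB', hpr, hmn, hm, hn⟩ := c.edge t ht
    have hbef : Before a b' e := ⟨m, n, hmn, hm, hn⟩
    have hb1 : Before a b' (proj a.proc e) :=
      before_filter (fun x => x.proc == a.proc) (by simp) (by simp [hpr]) hbef
    rw [hproj a.proc] at hb1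
    obtain ⟨m2, n2, hmn2, hm2, hn2⟩ := before_sublist List.filter_sublist hb1
    exact ⟨hne, a, b', m2, n2,
      actionAt_mem hA (hperm.mem_iff.1 (actionAt_mid hA).2),
      actionAt_mem hB' (hperm.mem_iff.1 (actionAt_mid hB').2), hpr, hmn2, hm2, hn2⟩
  have hnd2 : (sendIds e2).Nodup := by
    have hp : sendIds e ~ sendIds e2 := hperm.filterMap _
    exact hp.nodup_iff.1 hnd
  exact blocks_cycle hblocks hnd2 ⟨c.size, c.pos, c.node, c.lab, c.inj, hed⟩

/-! ### Restricting conflict-graph edges to the prefix -/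

lemma edge_restrict {e' : Exec} {i : Mid} {q : Pid} {v : Val} {X Y : Kind} {u w : Mid}
    (h1 : X = Kind.S ∨ u ≠ i) (h2 : Y = Kind.S ∨ w ≠ i)
    (hE : CGEdge (e' ++ [Action.rcv i q v]) X Y u w) : CGEdge e' X Y u w := by
  obtain ⟨hne, a, b', m, n, hA, hB', hpr, hmn, hm, hn⟩ := hE
  have hna : a ≠ Action.rcv i q v := by
    rcases h1 with hX | hui
    · rw [hX] at hA
      obtain ⟨⟨p, q2, v2, rfl⟩, _⟩ := hA
      simp
    · intro heq
      have hmid := (actionAt_mid hA).1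
      rw [heq] at hmid
      exact hui (by simpa [Action.mid] using hmid.symm)
  have hnb : b' ≠ Action.rcv i q v := by
    rcases h2 with hY | hwi
    · rw [hY] at hB'
      obtain ⟨⟨p, q2, v2, rfl⟩, _⟩ := hB'
      simp
    · intro heq
      have hmid := (actionAt_mid hB').1
      rw [heq] at hmid
      exact hwi (by simpa [Action.mid] using hmid.symm)
  have hnlen : n < e'.length := by
    have hlt : n < (e' ++ [Action.rcv i q v]).length := (List.getElem?_eq_some_iff.1 hn).1
    simp only [List.length_append, List.length_cons, List.length_nil] at hlt
    rcases Nat.lt_or_ge n e'.length with hlt' | hge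
    · exact hlt'
    · exfalso
      have hne' : n = e'.length := by omega
      rw [hne', List.getElem?_concat_length] at hn
      exact hnb (Option.some.inj hn).symm
  have hm' : e'[m]? = some a := by
    rwa [List.getElem?_append_left (lt_trans hmn hnlen)] at hm
  have hn' : e'[n]? = some b' := by rwa [List.getElem?_append_left hnlen] at hn
  exact ⟨hne, a, b', m, n, actionAt_mem hA (List.mem_of_getElem? hm'),
    actionAt_mem hB' (List.mem_of_getElem? hn'), hpr, hmn, hm', hn'⟩

end AuxProof

/-- In a borderline violation `e = e'·r`, the conflict-graph node of the final receive
`r` lies on every cycle that is bad or of size greater than `k`; its outgoing edge on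
the cycle is an `SX` edge and its incoming edge is not a `YS` edge. -/
theorem borderline_critical_node (S : System) (k : ℕ) (e' : Exec)
    (i : Mid) (q : Pid) (v : Val)
    (h : Borderline S k (e' ++ [Action.rcv i q v])) :
    ∀ c : CGCycle (e' ++ [Action.rcv i q v]), (¬ c.Good ∨ k < c.size) →
      ∃ idx < c.size, c.node idx = i ∧ (c.lab idx).1 = Kind.S ∧
        (c.lab ((idx + (c.size - 1)) % c.size)).2 ≠ Kind.S := by
  set e : Exec := e' ++ [Action.rcv i q v] with he
  intro c hbad
  -- basic facts from the borderline hypothesis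
  have hasync : AsyncExec S e := h.1
  have hsync' : KSynchronous k e' := by
    refine h.2.2 e' ⟨[Action.rcv i q v], rfl⟩ ?_
    intro heq
    have := congrArg List.length heq
    simp [he] at this
  have hnd : (sendIds e).Nodup := hasync.1
  have hnd' : (sendIds e').Nodup := by
    rw [he, sendIds_append] at hnd
    simpa [sendIds] using hnd
  have hr_pos : e[e'.length]? = some (Action.rcv i q v) := List.getElem?_concat_length
  -- inverse of the cyclic successor
  have hinv : ∀ t, t < c.size → ((t+1) % c.size + (c.size - 1)) % c.size = t := by
    intro t ht
    have hpos := c.pos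
    rw [Nat.mod_add_mod]
    have h1 : t + 1 + (c.size - 1) = t + c.size := by omega
    rw [h1, Nat.add_mod_right]
    exact Nat.mod_eq_of_lt ht
  -- whenever the whole cycle avoids the receive action of node `i`,
  -- it is a cycle of `e'`, contradicting k-synchronizability of the prefix
  have contra_e' : (∀ t, t < c.size →
      ((c.lab t).1 = Kind.S ∨ c.node t ≠ i) ∧
      ((c.lab t).2 = Kind.S ∨ c.node ((t+1) % c.size) ≠ i)) → False := by
    intro hcond
    have hed : ∀ t, t < c.size → CGEdge e' (c.lab t).1 (c.lab t).2
        (c.node t) (c.node ((t+1) % c.size)) := by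
      intro t ht
      exact edge_restrict (hcond t ht).1 (hcond t ht).2 (c.edge t ht)
    have hres := ksync_cycle hnd' hsync' ⟨c.size, c.pos, c.node, c.lab, c.inj, hed⟩
    rcases hbad with hb1 | hb2
    · exact hb1 hres.1
    · exact absurd hres.2 (not_le.2 hb2)
  by_cases hex : ∃ idx, idx < c.size ∧ c.node idx = i
  · obtain ⟨idx, hidx, hnode⟩ := hex
    -- the outgoing edge of node `i` starts with its send action
    have hlab1 : (c.lab idx).1 = Kind.S := by
      by_contra hns
      have hRlab : (c.lab idx).1 = Kind.R := by
        cases h' : (c.lab idx).1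
        · exact absurd h' hns
        · rfl
      obtain ⟨hne, a, b', m, n, hA, hB', hpr, hmn, hm, hn⟩ := c.edge idx hidx
      rw [hnode, hRlab] at hA
      obtain ⟨⟨q2, v2, rfl⟩, _⟩ := hA
      have hmeq : m = e'.length := asyncRecvUnique hasync hm hr_pos
      have hnlt : n < e.length := (List.getElem?_eq_some_iff.1 hn).1
      have hlen : e.length = e'.length + 1 := by simp [he]
      omega
    refine ⟨idx, hidx, hnode, hlab1, ?_⟩
    intro hlab2
    apply contra_e'
    intro t ht
    constructor
    · by_cases h' : c.node t = i
      · left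
        rw [c.inj t idx ht hidx (h'.trans hnode.symm)]
        exact hlab1
      · right; exact h'
    · by_cases h' : c.node ((t+1) % c.size) = i
      · left
        have h1 : (t+1) % c.size = idx :=
          c.inj _ _ (Nat.mod_lt _ c.pos) hidx (h'.trans hnode.symm)
        have h2 : t = (idx + (c.size - 1)) % c.size := by
          rw [← h1]; exact (hinv t ht).symm
        rw [h2]; exact hlab2
      · right; exact h'
  · push_neg at hex
    exact (contra_e' (fun t ht =>
      ⟨Or.inr (hex t ht), Or.inr (hex _ (Nat.mod_lt _ c.pos))⟩)).elim

end MP
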